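/- arXiv:2503.17974 — 4 statements merged into one kernel-verified Lean document; each statement's English description precedes it below -/
import Mathlib

section
/- The Lobachevsky function satisfies the duplication identity Λ(2θ) = 2Λ(θ) + 2Λ(θ + π/2) for all real θ. -/
open Real

noncomputable def Λ (θ : ℝ) : ℝ := -∫ t in (0:ℝ)..θ, Real.log |2 * Real.sin t|

/-!
Substituting `t ↦ 2t` gives `Λ(2θ) = -2 ∫₀^θ log|2 sin 2t| dt`. Off the discrete zero set of
`sin · cos`, `log|2 sin 2t| = log|2 sin t| + log|2 sin (t + π/2)|`, so the right-hand side splits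
into `2 Λ θ` and `2 (Λ(θ + π/2) - Λ(π/2))`. Finally `Λ(π/2) = 0` is the classical evaluation
`∫₀^{π/2} log sin t dt = -(π/2) log 2`.
-/

open Filter Interval MeasureTheory intervalIntegral

theorem intervalIntegrable_log_abs_const_mul_sin (c a b : ℝ) :
    IntervalIntegrable (fun t => log |c * sin t|) volume a b :=
  (analyticOnNhd_const.mul analyticOnNhd_sin).meromorphicOn.intervalIntegrable_log_norm

theorem integral_log_abs_two_mul_sin (a b : ℝ) :
    ∫ t in a..b, log |2 * sin t| = Λ a - Λ b := by
  rw [Λ, Λ, neg_sub_neg, integral_interval_sub_left] <;>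
    exact intervalIntegrable_log_abs_const_mul_sin 2 _ _

theorem log_abs_two_mul_sin_two_mul {t : ℝ} (hsin : sin t ≠ 0) (hcos : cos t ≠ 0) :
    log |2 * sin (2 * t)| = log |2 * sin t| + log |2 * sin (t + π / 2)| := by
  rw [sin_add_pi_div_two, ← log_mul (by positivity) (by positivity), ← abs_mul, sin_two_mul]
  ring_nf

theorem log_abs_two_mul_sin_two_mul_eventuallyEq (s : Set ℝ) :
    (fun t => log |2 * sin (2 * t)|) =ᶠ[codiscreteWithin s]
      fun t => log |2 * sin t| + log |2 * sin (t + π / 2)| := by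
  have hsin : sin ⁻¹' {0}ᶜ ∈ codiscrete ℝ :=
    analyticOnNhd_sin.preimage_zero_mem_codiscrete (x := π / 2) (by simp)
  have hcos : cos ⁻¹' {0}ᶜ ∈ codiscrete ℝ :=
    analyticOnNhd_cos.preimage_zero_mem_codiscrete (x := 0) (by simp)
  filter_upwards [codiscreteWithin_mono (Set.subset_univ s) hsin,
    codiscreteWithin_mono (Set.subset_univ s) hcos] with t hst hct
  exact log_abs_two_mul_sin_two_mul hst hct

theorem lobachevsky_pi_div_two : Λ (π / 2) = 0 := by
  have hsplit : ∀ t ∈ Ι 0 (π / 2), log |2 * sin t| = log 2 + log (sin t) := by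
    intro t ht
    rw [Set.uIoc_of_le (by positivity)] at ht
    have hsin : 0 < sin t := sin_pos_of_pos_of_lt_pi ht.1 (by linarith [ht.2, pi_pos])
    rw [abs_of_pos (by positivity), log_mul two_ne_zero hsin.ne']
  rw [Λ, integral_congr_ae (ae_of_all _ hsplit), integral_add (g := fun t => log (sin t))
    intervalIntegrable_const intervalIntegrable_log_sin, intervalIntegral.integral_const,
    integral_log_sin_zero_pi_div_two]
  simp only [sub_zero, smul_eq_mul]
  ring

theorem integral_log_abs_two_mul_sin_add_pi_div_two (θ : ℝ) :
    ∫ t in (0:ℝ)..θ, log |2 * sin (t + π / 2)| = -Λ (θ + π / 2) := by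
  rw [integral_comp_add_right (fun t => log |2 * sin t|), integral_log_abs_two_mul_sin,
    zero_add, lobachevsky_pi_div_two, zero_sub]

theorem lobachevsky_duplication (θ : ℝ) : Λ (2 * θ) = 2 * Λ θ + 2 * Λ (θ + π / 2) := by
  have hshift_integrable : IntervalIntegrable (fun t => log |2 * sin (t + π / 2)|) volume 0 θ := by
    simpa using
      (intervalIntegrable_log_abs_const_mul_sin 2 (π / 2) (θ + π / 2)).comp_add_right (π / 2)
  have hdup : ∫ t in (0:ℝ)..θ, log |2 * sin (2 * t)| = -Λ θ - Λ (θ + π / 2) := by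
    rw [integral_congr_codiscreteWithin (log_abs_two_mul_sin_two_mul_eventuallyEq _),
      integral_add (intervalIntegrable_log_abs_const_mul_sin 2 0 θ) hshift_integrable,
      integral_log_abs_two_mul_sin_add_pi_div_two]
    unfold Λ
    ring
  rw [Λ, ← mul_zero 2, ← mul_integral_comp_mul_left, hdup]
  ring
end

section
/- The Lobachevsky function attains its maximum over [0, π] at θ = π/6: for all θ ∈ [0, π], Λ(θ) ≤ Λ(π/6). -/
open Real

namespace LobachevskyAux

open MeasureTheory Set

noncomputable def f (t : ℝ) : ℝ := Real.log |2 * Real.sin t|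

lemma measurable_f : Measurable f :=
  Real.measurable_log.comp (continuous_abs.comp (continuous_const.mul continuous_sin)).measurable

/-- `log` is interval integrable on `[0, c]` for `c ∈ [0, 1]`. -/
lemma intervalIntegrable_log_01 {c : ℝ} (hc : 0 ≤ c) (h1 : c ≤ 1) :
    IntervalIntegrable Real.log volume 0 c := by
  have hint : IntervalIntegrable (fun x : ℝ => 2 * x ^ (-(1:ℝ)/2)) volume 0 c :=
    (intervalIntegral.intervalIntegrable_rpow' (by norm_num)).const_mul 2
  refine hint.mono_fun Real.measurable_log.aestronglyMeasurable ?_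
  filter_upwards [MeasureTheory.ae_restrict_mem measurableSet_uIoc] with x hx
  rw [Set.uIoc_of_le hc] at hx
  obtain ⟨hx0, hxc⟩ := hx
  have hx1 : x ≤ 1 := hxc.trans h1
  have hlog : Real.log x ≤ 0 := Real.log_nonpos hx0.le hx1
  have hs : 0 < Real.sqrt x := Real.sqrt_pos.2 hx0
  have hinv : Real.log (1 / Real.sqrt x) ≤ 1 / Real.sqrt x := by
    have := Real.log_le_sub_one_of_pos (x := 1 / Real.sqrt x) (by positivity)
    linarith
  have hls : Real.log (1 / Real.sqrt x) = -(Real.log x / 2) := by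
    rw [one_div, Real.log_inv, Real.log_sqrt hx0.le]
  rw [hls] at hinv
  have h2 : -Real.log x ≤ 2 / Real.sqrt x := by
    rw [div_eq_mul_inv, ← one_div] at *
    linarith
  have hrpow : x ^ (-(1:ℝ)/2) = 1 / Real.sqrt x := by
    rw [Real.sqrt_eq_rpow, one_div, ← Real.rpow_neg hx0.le]
    norm_num
  simp only [Real.norm_eq_abs, abs_of_nonpos hlog]
  rw [abs_of_nonneg (by positivity), hrpow, mul_one_div]
  exact h2

/-- `log` is interval integrable on `[0, c]` for `c ≥ 0`. -/
lemma intervalIntegrable_log_zero {c : ℝ} (hc : 0 ≤ c) :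
    IntervalIntegrable Real.log volume 0 c := by
  rcases le_or_gt c 1 with h1 | h1
  · exact intervalIntegrable_log_01 hc h1
  · refine (intervalIntegrable_log_01 (c := 1) zero_le_one le_rfl).trans
      (intervalIntegral.intervalIntegrable_log ?_)
    rw [Set.uIcc_of_le h1.le]
    simp only [Set.mem_Icc, not_and]
    intro h
    norm_num at h

/-- `f` is interval integrable on `[0, π/2]`. -/
lemma f_int_half : IntervalIntegrable f volume 0 (π / 2) := by
  have hπ : (0:ℝ) < π / 2 := by positivity
  have habs : IntervalIntegrable (fun x : ℝ => |Real.log x| + 1) volume 0 (π / 2) :=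
    ((intervalIntegrable_log_zero hπ.le).abs).add (intervalIntegrable_const)
  refine habs.mono_fun measurable_f.aestronglyMeasurable ?_
  filter_upwards [MeasureTheory.ae_restrict_mem measurableSet_uIoc] with t ht
  rw [Set.uIoc_of_le hπ.le] at ht
  obtain ⟨ht0, htπ⟩ := ht
  have hsinpos : 0 < Real.sin t := Real.sin_pos_of_pos_of_lt_pi ht0 (by linarith [Real.pi_pos])
  have hub : 2 * Real.sin t ≤ 2 := by nlinarith [Real.sin_le_one t]
  have hlb : 4 * t / π ≤ 2 * Real.sin t := by
    have := Real.mul_le_sin (x := t) ht0.le (by linarith)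
    rw [div_mul_eq_mul_div] at this
    have hπ0 := Real.pi_pos
    rw [div_le_iff₀ hπ0] at *
    nlinarith
  have habs2 : |2 * Real.sin t| = 2 * Real.sin t := abs_of_pos (by linarith)
  have h1 : f t ≤ Real.log 2 := by
    unfold f
    rw [habs2]
    exact Real.log_le_log (by linarith) hub
  have h2 : Real.log (4 * t / π) ≤ f t := by
    unfold f
    rw [habs2]
    exact Real.log_le_log (by positivity) hlb
  have hlog4 : Real.log (4 * t / π) = Real.log t + Real.log (4 / π) := by
    rw [show 4 * t / π = t * (4 / π) by ring]
    rw [Real.log_mul (ne_of_gt ht0) (by positivity)]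
  have hl2 : Real.log 2 ≤ 1 := by
    have := Real.log_le_sub_one_of_pos (x := 2) (by norm_num)
    linarith
  have hl4π : |Real.log (4 / π)| ≤ 1 := by
    have hπlt : π < 4 := by linarith [Real.pi_lt_d2]
    have hπgt : 1 < 4 / π := by
      rw [lt_div_iff₀ Real.pi_pos]; linarith
    have hle : 4 / π ≤ 2 := by
      rw [div_le_iff₀ Real.pi_pos]; nlinarith [Real.pi_gt_three]
    rw [abs_of_nonneg (Real.log_nonneg hπgt.le)]
    calc Real.log (4 / π) ≤ Real.log 2 := Real.log_le_log (by positivity) hle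
      _ ≤ 1 := hl2
  simp only [Real.norm_eq_abs]
  rw [abs_of_nonneg (by positivity : (0:ℝ) ≤ |Real.log t| + 1)]
  rcases abs_le.1 hl4π with ⟨hA, hB⟩
  rcases le_or_gt 0 (f t) with hf0 | hf0
  · rw [abs_of_nonneg hf0]
    calc f t ≤ Real.log 2 := h1
      _ ≤ 1 := hl2
      _ ≤ |Real.log t| + 1 := by linarith [abs_nonneg (Real.log t)]
  · rw [abs_of_neg hf0]
    have : -f t ≤ -(Real.log t + Real.log (4 / π)) := by
      rw [hlog4] at h2; linarith
    calc -f t ≤ -Real.log t - Real.log (4 / π) := by linarith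
      _ ≤ |Real.log t| + 1 := by
          have := neg_abs_le (Real.log t)
          have := le_abs_self (Real.log t)
          linarith

lemma f_reflect (c t : ℝ) (h : Real.sin (c - t) = Real.sin t ∨ Real.sin (c - t) = -Real.sin t ∨ Real.sin (c - t) = Real.cos t) : True := trivial

/-- `f` is interval integrable on `[π/2, π]`. -/
lemma f_int_second : IntervalIntegrable f volume (π / 2) π := by
  have h := (f_int_half).comp_sub_left π
  have he : (fun x => f (π - x)) = f := by
    funext x
    unfold f
    rw [Real.sin_pi_sub]
  rw [he] at h
  rw [sub_zero, show π - π / 2 = π / 2 from by ring] at h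
  exact h.symm

lemma f_int_zero_pi : IntervalIntegrable f volume 0 π :=
  f_int_half.trans f_int_second

lemma f_int (a b : ℝ) (ha : a ∈ Set.Icc 0 π) (hb : b ∈ Set.Icc 0 π) :
    IntervalIntegrable f volume a b := by
  refine f_int_zero_pi.mono_set ?_
  rw [Set.uIcc_of_le Real.pi_pos.le]
  exact Set.uIcc_subset_Icc ha hb

noncomputable def g (t : ℝ) : ℝ := Real.log |2 * Real.cos t|

lemma g_eq (t : ℝ) : g t = f (π / 2 - t) := by
  unfold f g
  rw [Real.sin_pi_div_two_sub]

lemma g_int_half : IntervalIntegrable g volume 0 (π / 2) := by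
  have h := (f_int_half).comp_sub_left (π / 2)
  simp only [sub_zero, sub_self] at h
  have he : (fun x => f (π / 2 - x)) = g := by
    funext x; rw [g_eq]
  rw [he] at h
  exact h.symm

lemma integral_g_eq_f : ∫ t in (0:ℝ)..(π/2), g t = ∫ t in (0:ℝ)..(π/2), f t := by
  have := intervalIntegral.integral_comp_sub_left (a := 0) (b := π/2) f (π/2)
  simp only [sub_zero, sub_self] at this
  calc ∫ t in (0:ℝ)..(π/2), g t = ∫ t in (0:ℝ)..(π/2), f (π/2 - t) := by
        refine intervalIntegral.integral_congr (fun x _ => ?_)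
        rw [g_eq]
    _ = ∫ t in (0:ℝ)..(π/2), f t := by rw [this]

lemma integral_second_eq : ∫ t in (π/2)..π, f t = ∫ t in (0:ℝ)..(π/2), f t := by
  have h := intervalIntegral.integral_comp_sub_left (a := 0) (b := π/2) f π
  rw [sub_zero, show π - π / 2 = π / 2 from by ring] at h
  have he : ∀ x, f (π - x) = f x := by
    intro x; unfold f; rw [Real.sin_pi_sub]
  rw [intervalIntegral.integral_congr (fun x _ => he x)] at h
  rw [← h]

/-- The classical identity: `∫₀^π log |2 sin t| dt = 0`. -/
lemma integral_f_zero_pi : ∫ t in (0:ℝ)..π, f t = 0 := by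
  set J : ℝ := ∫ t in (0:ℝ)..(π/2), f t with hJ
  have hsplit : ∫ t in (0:ℝ)..π, f t = 2 * J := by
    rw [← intervalIntegral.integral_add_adjacent_intervals (b := π/2) f_int_half f_int_second,
      integral_second_eq, ← hJ]
    ring
  -- duplication: f (2 s) = f s + g s for a.e. s ∈ (0, π/2)
  have hdup : ∫ s in (0:ℝ)..(π/2), f (2 * s) = ∫ s in (0:ℝ)..(π/2), (f s + g s) := by
    refine intervalIntegral.integral_congr_ae ?_
    have hnull : (volume : Measure ℝ) {π/2} = 0 := measure_singleton _
    rw [MeasureTheory.ae_iff]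
    refine measure_mono_null (fun x hx => ?_) hnull
    simp only [Set.mem_setOf_eq, not_forall] at hx
    obtain ⟨hmem, hne⟩ := hx
    rw [Set.uIoc_of_le (by positivity : (0:ℝ) ≤ π/2)] at hmem
    obtain ⟨hx0, hxh⟩ := hmem
    -- show x = π/2 by contradiction: if x < π/2 then the identity holds
    by_contra hxe
    simp only [Set.mem_singleton_iff] at hxe
    have hxlt : x < π / 2 := lt_of_le_of_ne hxh hxe
    apply hne
    have hsin : 0 < Real.sin x := Real.sin_pos_of_pos_of_lt_pi hx0 (by linarith [Real.pi_pos])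
    have hcos : 0 < Real.cos x := Real.cos_pos_of_mem_Ioo ⟨by linarith [Real.pi_pos], hxlt⟩
    unfold f g
    rw [Real.sin_two_mul]
    have : |2 * (2 * Real.sin x * Real.cos x)| = |2 * Real.sin x| * |2 * Real.cos x| := by
      rw [← abs_mul]; ring_nf
    rw [this, Real.log_mul (by positivity) (by positivity)]
  have hcomp : ∫ s in (0:ℝ)..(π/2), f (2 * s) = (2:ℝ)⁻¹ * ∫ t in (0:ℝ)..π, f t := by
    have := intervalIntegral.integral_comp_mul_left (a := 0) (b := π/2) f (two_ne_zero)
    simp only [mul_zero, smul_eq_mul, show 2 * (π / 2) = π from by ring] at this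
    rw [this]
  have hsum : ∫ s in (0:ℝ)..(π/2), (f s + g s) = J + J := by
    rw [intervalIntegral.integral_add f_int_half g_int_half, integral_g_eq_f, ← hJ]
  have : (2:ℝ)⁻¹ * (2 * J) = J + J := by
    rw [← hsplit, ← hcomp, hdup, hsum]
  have hJ0 : J = 0 := by linarith
  rw [hsplit, hJ0]; ring

/-- sign: `f ≤ 0` on `[0, π/6]`. -/
lemma f_nonpos_low {t : ℝ} (h0 : 0 ≤ t) (h6 : t ≤ π / 6) : f t ≤ 0 := by
  have hπ := Real.pi_pos
  have hs0 : 0 ≤ Real.sin t := Real.sin_nonneg_of_nonneg_of_le_pi h0 (by linarith)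
  have hmono : Real.sin t ≤ Real.sin (π / 6) := by
    refine Real.strictMonoOn_sin.monotoneOn ⟨by linarith, by linarith⟩ ⟨by linarith, by linarith⟩ h6
  rw [Real.sin_pi_div_six] at hmono
  unfold f
  rw [abs_of_nonneg (by linarith)]
  exact Real.log_nonpos (by linarith) (by linarith)

/-- sign: `f ≥ 0` on `[π/6, 5π/6]`. -/
lemma f_nonneg_mid {t : ℝ} (h1 : π / 6 ≤ t) (h2 : t ≤ 5 * π / 6) : 0 ≤ f t := by
  have hπ := Real.pi_pos
  have hhalf : (1:ℝ) / 2 ≤ Real.sin t := by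
    rcases le_or_gt t (π / 2) with hc | hc
    · have := Real.strictMonoOn_sin.monotoneOn
        (⟨by linarith, by linarith⟩ : π/6 ∈ Set.Icc (-(π/2)) (π/2))
        (⟨by linarith, hc⟩ : t ∈ Set.Icc (-(π/2)) (π/2)) h1
      rwa [Real.sin_pi_div_six] at this
    · rw [← Real.sin_pi_sub]
      have := Real.strictMonoOn_sin.monotoneOn
        (⟨by linarith, by linarith⟩ : π/6 ∈ Set.Icc (-(π/2)) (π/2))
        (⟨by linarith, by linarith⟩ : π - t ∈ Set.Icc (-(π/2)) (π/2))
        (by linarith)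
      rwa [Real.sin_pi_div_six] at this
  unfold f
  rw [abs_of_nonneg (by linarith)]
  exact Real.log_nonneg (by linarith)

/-- sign: `f ≤ 0` on `[5π/6, π]`. -/
lemma f_nonpos_high {t : ℝ} (h1 : 5 * π / 6 ≤ t) (h2 : t ≤ π) : f t ≤ 0 := by
  have hπ := Real.pi_pos
  have : f t = f (π - t) := by
    unfold f; rw [Real.sin_pi_sub]
  rw [this]
  exact f_nonpos_low (by linarith) (by linarith)

lemma integral_nonpos' {a b : ℝ} (hab : a ≤ b) {h : ℝ → ℝ}
    (hf : ∀ u ∈ Set.Icc a b, h u ≤ 0) : (∫ u in a..b, h u) ≤ 0 := by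
  have := intervalIntegral.integral_nonneg (μ := volume) (f := fun u => -h u) hab
    (fun u hu => neg_nonneg.2 (hf u hu))
  rw [intervalIntegral.integral_neg] at this
  linarith

end LobachevskyAux

theorem lobachevsky_max (θ : ℝ) (hθ : θ ∈ Set.Icc 0 π) : Λ θ ≤ Λ (π / 6) := by
  open LobachevskyAux in
  have hπ := Real.pi_pos
  obtain ⟨h0, hπθ⟩ := hθ
  have h6mem : (π/6 : ℝ) ∈ Set.Icc (0:ℝ) π := ⟨by positivity, by linarith⟩
  have hθmem : θ ∈ Set.Icc (0:ℝ) π := ⟨h0, hπθ⟩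
  have hΛ : ∀ x, Λ x = -∫ t in (0:ℝ)..x, f t := fun x => rfl
  rcases le_or_gt θ (π/6) with hc1 | hc1
  · -- Λ(π/6) - Λ(θ) = -∫_θ^{π/6} f ≥ 0
    have hsplit := intervalIntegral.integral_add_adjacent_intervals (a := 0) (b := θ) (c := π/6)
      (f_int 0 θ ⟨le_rfl, hπ.le⟩ hθmem) (f_int θ (π/6) hθmem h6mem)
    have hneg : (∫ t in θ..(π/6), f t) ≤ 0 :=
      integral_nonpos' hc1 (fun u hu => f_nonpos_low (le_trans h0 hu.1) hu.2)
    rw [hΛ, hΛ]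
    linarith [hsplit]
  · rcases le_or_gt θ (5 * π / 6) with hc2 | hc2
    · have hsplit := intervalIntegral.integral_add_adjacent_intervals (a := 0) (b := π/6) (c := θ)
        (f_int 0 (π/6) ⟨le_rfl, hπ.le⟩ h6mem) (f_int (π/6) θ h6mem hθmem)
      have hpos : 0 ≤ ∫ t in (π/6)..θ, f t :=
        intervalIntegral.integral_nonneg hc1.le (fun u hu => f_nonneg_mid hu.1 (hu.2.trans hc2))
      rw [hΛ, hΛ]
      linarith [hsplit]
    · -- Λ(θ) ≤ Λ(π) = 0 ≤ Λ(π/6)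
      have hsplit := intervalIntegral.integral_add_adjacent_intervals (a := 0) (b := θ) (c := π)
        (f_int 0 θ ⟨le_rfl, hπ.le⟩ hθmem) (f_int θ π hθmem ⟨hπ.le, le_rfl⟩)
      have hneg : (∫ t in θ..π, f t) ≤ 0 :=
        integral_nonpos' hπθ (fun u hu => f_nonpos_high (le_trans hc2.le hu.1) hu.2)
      have hΛθ : Λ θ ≤ 0 := by
        rw [hΛ]
        have := integral_f_zero_pi
        linarith [hsplit]
      have hΛ6 : 0 ≤ Λ (π/6) := by
        rw [hΛ]
        have : (∫ t in (0:ℝ)..(π/6), f t) ≤ 0 :=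
          integral_nonpos' (by positivity) (fun u hu => f_nonpos_low hu.1 hu.2)
        linarith
      linarith
end

section
/- Λ(π/4) equals half of Catalan's constant: Λ(π/4) = (1/2)·∑_{k=0}^∞ (-1)^k/(2k+1)². -/
open Real

/-!
Write `S` and `C` for the integrals of `log ∘ sin` and `log ∘ cos` over `[0, π/4]`. Since
`log |2 sin t| = log 2 + log (sin t)` almost everywhere, `Λ (π/4) = -(π/4) log 2 - S`. The
reflection `t ↦ π/2 - t` and Euler's `∫₀^{π/2} log (sin t) dt = -(π/2) log 2` give
`S + C = -(π/2) log 2`, so `Λ (π/4) = (C - S) / 2 = ½ ∫₀^{π/4} -log (tan t) dt`. The substitution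
`x = tan t` turns this into `½ ∫₀¹ -log x / (1 + x²) dx`; expanding `1 / (1 + x²)` as a geometric
series and using `∫₀¹ x^{2k} (-log x) dx = 1 / (2k+1)²` yields Catalan's constant.
-/

open MeasureTheory Set intervalIntegral
open scoped Interval

/-- Holds for every `x`: where `sin x = 0` or `cos x = 0` both sides vanish, because `log 0 = 0`,
`log (-1) = 0` and `tan x = sin x / cos x` with `y / 0 = 0`. -/
theorem Real.log_tan (x : ℝ) : log (tan x) = log (sin x) - log (cos x) := by
  rw [tan_eq_sin_div_cos]
  by_cases hs : sin x = 0
  · rcases sin_eq_zero_iff_cos_eq.1 hs with hc | hc <;> simp [hs, hc]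
  by_cases hc : cos x = 0
  · rcases cos_eq_zero_iff_sin_eq.1 hc with hs' | hs' <;> simp [hs', hc]
  exact log_div hs hc

theorem ae_sin_ne_zero : ∀ᵐ t : ℝ, sin t ≠ 0 :=
  ((countable_range fun n : ℤ => (n : ℝ) * π).mono fun _ ht => sin_eq_zero_iff.1 ht).ae_notMem _

theorem Λ_eq_neg_mul_log_two_sub_integral_log_sin (θ : ℝ) :
    Λ θ = -θ * log 2 - ∫ t in 0..θ, log (sin t) := by
  have hae : ∀ᵐ t, t ∈ Ι 0 θ → log |2 * sin t| = log 2 + log (sin t) := by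
    filter_upwards [ae_sin_ne_zero] with t ht _
    rw [log_abs, log_mul two_ne_zero ht]
  rw [Λ, integral_congr_ae hae,
    integral_add (g := fun t => log (sin t)) intervalIntegrable_const intervalIntegrable_log_sin,
    intervalIntegral.integral_const, smul_eq_mul, sub_zero]
  ring

theorem integral_log_sin_add_integral_log_cos (θ : ℝ) :
    (∫ t in 0..θ, log (sin t)) + ∫ t in 0..π / 2 - θ, log (cos t) = -log 2 * π / 2 := by
  have hreflect : ∫ t in 0..π / 2 - θ, log (cos t) = ∫ t in θ..π / 2, log (sin t) := by
    simpa [sin_pi_div_two_sub] using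
      integral_comp_sub_left (fun t => log (sin t)) (π / 2) (a := 0) (b := π / 2 - θ)
  rw [hreflect, integral_add_adjacent_intervals (f := fun t => log (sin t))
    intervalIntegrable_log_sin intervalIntegrable_log_sin, integral_log_sin_zero_pi_div_two]

theorem integral_comp_tan (g : ℝ → ℝ) (a b : ℝ) :
    ∫ u in arctan a..arctan b, g (tan u) = ∫ x in a..b, g x / (1 + x ^ 2) := by
  have := integral_comp_mul_deriv_of_deriv_nonneg (a := a) (b := b) (g := fun u => g (tan u))
    continuous_arctan.continuousOn (fun x _ => hasDerivAt_arctan x) (fun x _ => by positivity)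
  simpa [Function.comp_def, tan_arctan, div_eq_mul_inv] using this.symm

theorem integral_pow_mul_log (n : ℕ) :
    ∫ x in 0..1, x ^ n * log x = -1 / ((n : ℝ) + 1) ^ 2 := by
  -- `x ^ (n + 1) * log x` is written as `x ^ n * (x * log x)` to get continuity at `0` for free
  set F : ℝ → ℝ := fun x => x ^ n * (x * log x) / (n + 1) - x ^ (n + 1) / (n + 1) ^ 2
  have hF : Continuous F := by fun_prop
  have hF' : ∀ x ∈ Ioo (0 : ℝ) 1, HasDerivAt F (x ^ n * log x) x := by
    intro x hx
    have := (((hasDerivAt_pow n x).mul (hasDerivAt_mul_log hx.1.ne')).div_const ((n : ℝ) + 1)).sub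
      ((hasDerivAt_pow (n + 1) x).div_const (((n : ℝ) + 1) ^ 2))
    refine this.congr_deriv ?_
    rcases n with _ | n
    · simp
    · simp only [Nat.add_sub_cancel, pow_succ]
      push_cast
      field_simp
      ring
  rw [integral_eq_sub_of_hasDerivAt_of_le zero_le_one hF.continuousOn hF'
    (intervalIntegrable_log'.continuousOn_mul (continuous_pow n).continuousOn)]
  simp [F]
  ring

theorem integral_neg_log_div_one_add_sq :
    ∫ x in 0..1, -log x / (1 + x ^ 2) = ∑' k : ℕ, (-1 : ℝ) ^ k / (2 * k + 1) ^ 2 := by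
  set F : ℕ → ℝ → ℝ := fun k x => (-1) ^ k * (x ^ (2 * k) * -log x)
  have hmoment (k : ℕ) : ∫ x in Ioo (0 : ℝ) 1, x ^ (2 * k) * -log x = 1 / (2 * k + 1) ^ 2 := by
    rw [← integral_Ioc_eq_integral_Ioo, ← integral_of_le zero_le_one]
    simp only [mul_neg, intervalIntegral.integral_neg]
    rw [integral_pow_mul_log]
    push_cast
    ring
  have hintegrable (k : ℕ) : IntegrableOn (F k) (Ioo 0 1) :=
    ((intervalIntegrable_log'.neg.continuousOn_mul (continuous_pow (2 * k)).continuousOn).1.mono_set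
      Ioo_subset_Ioc_self).const_mul _
  have hnorm (k : ℕ) : ∫ x in Ioo (0 : ℝ) 1, ‖F k x‖ = 1 / (2 * k + 1) ^ 2 := by
    rw [← hmoment k]
    refine setIntegral_congr_fun measurableSet_Ioo fun x hx => ?_
    rw [norm_mul, norm_pow, norm_neg, norm_one, one_pow, one_mul, Real.norm_of_nonneg]
    exact mul_nonneg (pow_nonneg hx.1.le _) (neg_nonneg.2 (log_nonpos hx.1.le hx.2.le))
  have hsummable : Summable fun k : ℕ => 1 / (2 * (k : ℝ) + 1) ^ 2 := by
    have := (summable_one_div_nat_pow.2 one_lt_two).comp_injective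
      (i := fun k : ℕ => 2 * k + 1) fun a b h => by simp only at h; omega
    exact this.congr fun k => by simp
  have hgeometric : ∀ x ∈ Ioo (0 : ℝ) 1, ∑' k, F k x = -log x / (1 + x ^ 2) := by
    intro x hx
    have hx2 : ‖-x ^ 2‖ < 1 := by
      rw [norm_neg, norm_pow, Real.norm_of_nonneg hx.1.le]
      exact pow_lt_one₀ hx.1.le hx.2 two_ne_zero
    simp only [F, ← mul_assoc, pow_mul, ← mul_pow, neg_one_mul]
    rw [tsum_mul_right, tsum_geometric_of_norm_lt_one hx2, sub_neg_eq_add, div_eq_inv_mul]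
  have hswap := hasSum_integral_of_summable_integral_norm hintegrable
    (by simpa only [hnorm] using hsummable)
  rw [integral_of_le zero_le_one, integral_Ioc_eq_integral_Ioo,
    ← setIntegral_congr_fun measurableSet_Ioo hgeometric, ← hswap.tsum_eq]
  congr with k
  rw [MeasureTheory.integral_const_mul, hmoment, mul_one_div]

theorem lobachevsky_pi_div_four :
    Λ (π / 4) = (1 / 2) * ∑' k : ℕ, (-1 : ℝ) ^ k / (2 * k + 1) ^ 2 := by
  have hcomplement := integral_log_sin_add_integral_log_cos (π / 4)
  have htan : ∫ u in 0..π / 4, -log (tan u) = ∫ x in 0..1, -log x / (1 + x ^ 2) := by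
    simpa using integral_comp_tan (fun x => -log x) 0 1
  rw [show π / 2 - π / 4 = π / 4 by ring] at hcomplement
  simp only [log_tan, neg_sub] at htan
  rw [integral_sub (f := fun t => log (cos t)) (g := fun t => log (sin t))
    intervalIntegrable_log_cos intervalIntegrable_log_sin] at htan
  rw [Λ_eq_neg_mul_log_two_sub_integral_log_sin, ← integral_neg_log_div_one_add_sq, ← htan]
  linarith
end

section
/- The Lobachevsky function has the Fourier series representation Λ(θ) = (1/2) ∑_{m=1}^∞ sin(2mθ)/m² for all real θ. -/
open Real

/-!
For `|r| < 1` the real part of `-log (1 - r e^{2it})` gives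
`-log ‖1 - r e^{2it}‖ = ∑ rⁿ cos (2nt) / n`; integrating termwise over `[0, θ]` gives
`∑ rⁿ sin (2nθ) / (2n²)`. Let `r → 1⁻`: on the series side this is Abel's theorem; on the integral
side the integrand tends to `-log |2 sin t|`, with domination because
`|sin 2t| ≤ ‖1 - r e^{2it}‖ ≤ 1 + |r|` for every real `r` and `log |sin 2t|` is integrable.
-/

open Filter Topology MeasureTheory Complex

noncomputable def lobachevskyAbelMean (r θ : ℝ) : ℝ :=
  ∫ t in (0 : ℝ)..θ, -Real.log ‖1 - r * exp ((2 * t : ℝ) * I)‖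

/-- `‖1 - r e^{ix}‖² = (r - cos x)² + sin² x`. -/
lemma abs_sin_le_norm_one_sub_mul_exp (r x : ℝ) : |Real.sin x| ≤ ‖1 - r * exp (x * I)‖ := by
  rw [Complex.norm_def]
  apply Real.abs_le_sqrt
  have hre : (1 - r * exp (x * I)).re = 1 - r * Real.cos x := by
    simp [Complex.exp_ofReal_mul_I_re]
  have him : (1 - r * exp (x * I)).im = -(r * Real.sin x) := by
    simp [Complex.exp_ofReal_mul_I_im]
  rw [Complex.normSq_apply, hre, him]
  nlinarith [Real.sin_sq_add_cos_sq x, sq_nonneg (r - Real.cos x)]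

lemma norm_one_sub_mul_exp_le (r x : ℝ) : ‖1 - r * exp (x * I)‖ ≤ 1 + |r| := by
  calc ‖1 - r * exp (x * I)‖ ≤ ‖(1 : ℂ)‖ + ‖r * exp (x * I)‖ := norm_sub_le _ _
    _ = 1 + |r| := by simp [Complex.norm_exp_ofReal_mul_I]

lemma norm_one_sub_exp_two_mul (t : ℝ) : ‖1 - exp ((2 * t : ℝ) * I)‖ = |2 * Real.sin t| := by
  rw [norm_sub_rev, mul_comm, Complex.norm_exp_I_mul_ofReal_sub_one, Real.norm_eq_abs]
  ring_nf

lemma hasSum_pow_mul_cos_div {r : ℝ} (hr : |r| < 1) (x : ℝ) :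
    HasSum (fun n : ℕ => r ^ n * Real.cos (n * x) / n) (-Real.log ‖1 - r * exp (x * I)‖) := by
  have hz : ‖(r : ℂ) * exp (x * I)‖ < 1 := by
    rwa [norm_mul, Complex.norm_exp_ofReal_mul_I, norm_real, Real.norm_eq_abs, mul_one]
  convert Complex.hasSum_re (Complex.hasSum_taylorSeries_neg_log hz) using 1
  · ext n
    have hterm : ((r : ℂ) * exp (x * I)) ^ n / n
        = ((r ^ n / n : ℝ) : ℂ) * exp ((n * x : ℝ) * I) := by
      push_cast
      rw [mul_pow, ← Complex.exp_nat_mul]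
      ring_nf
    rw [hterm, re_ofReal_mul, exp_ofReal_mul_I_re]
    ring
  · rw [neg_re, log_re]

lemma integral_cos_mul {c : ℝ} (hc : c ≠ 0) (θ : ℝ) :
    ∫ t in (0 : ℝ)..θ, Real.cos (c * t) = Real.sin (c * θ) / c := by
  rw [intervalIntegral.integral_comp_mul_left (fun t => Real.cos t) hc, integral_cos, mul_zero,
    Real.sin_zero, sub_zero, smul_eq_mul, inv_mul_eq_div]

lemma integral_pow_mul_cos_div (r θ : ℝ) (n : ℕ) :
    ∫ t in (0 : ℝ)..θ, r ^ n * Real.cos (n * (2 * t)) / n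
      = Real.sin (2 * n * θ) / n ^ 2 / 2 * r ^ n := by
  rcases eq_or_ne n 0 with rfl | hn
  · simp -- both sides vanish since `x / 0 = 0`
  have hintegrand : ∀ t : ℝ, r ^ n * Real.cos (n * (2 * t)) / n
      = r ^ n / n * Real.cos ((2 * n) * t) := fun t => by ring_nf
  simp_rw [hintegrand]
  rw [intervalIntegral.integral_const_mul, integral_cos_mul (by positivity)]
  field_simp

lemma hasSum_lobachevskyAbelMean {r : ℝ} (hr : |r| < 1) (θ : ℝ) :
    HasSum (fun n : ℕ => Real.sin (2 * n * θ) / n ^ 2 / 2 * r ^ n) (lobachevskyAbelMean r θ) := by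
  simp_rw [lobachevskyAbelMean, ← integral_pow_mul_cos_div]
  refine intervalIntegral.hasSum_integral_of_dominated_convergence (fun n _ => |r| ^ n)
    (fun n => by fun_prop) (fun n => ae_of_all _ fun t _ => ?_)
    (ae_of_all _ fun t _ => summable_geometric_of_lt_one (abs_nonneg r) hr)
    intervalIntegrable_const (ae_of_all _ fun t _ => hasSum_pow_mul_cos_div hr (2 * t))
  rcases eq_or_ne n 0 with rfl | hn
  · simp
  rw [norm_div, norm_mul, norm_pow, Real.norm_eq_abs, Real.norm_eq_abs, Real.norm_natCast]
  calc |r| ^ n * |Real.cos (n * (2 * t))| / n ≤ |r| ^ n * 1 / 1 := by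
        gcongr
        · exact Real.abs_cos_le_one _
        · exact_mod_cast Nat.one_le_iff_ne_zero.mpr hn
    _ = |r| ^ n := by ring

lemma ae_sin_mul_ne_zero {c : ℝ} (hc : c ≠ 0) : ∀ᵐ t : ℝ, Real.sin (c * t) ≠ 0 := by
  have hzeros : {t : ℝ | Real.sin (c * t) = 0} ⊆ Set.range fun n : ℤ => n * π / c := by
    intro t ht
    obtain ⟨n, hn⟩ := Real.sin_eq_zero_iff.mp ht
    exact ⟨n, show n * π / c = t by rw [hn]; field_simp⟩
  filter_upwards [((Set.countable_range _).mono hzeros).ae_notMem volume] with t ht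
  exact ht

lemma abs_log_le_abs_log_add_abs_log {a b x : ℝ} (ha : 0 < a) (hax : a ≤ x) (hxb : x ≤ b) :
    |Real.log x| ≤ |Real.log a| + |Real.log b| :=
  (abs_le_max_abs_abs (Real.log_le_log ha hax) (Real.log_le_log (ha.trans_le hax) hxb)).trans
    (max_le_add_of_nonneg (abs_nonneg _) (abs_nonneg _))

lemma tendsto_lobachevskyAbelMean (θ : ℝ) :
    Tendsto (fun r => lobachevskyAbelMean r θ) (𝓝 1) (𝓝 (Λ θ)) := by
  have hΛ : Λ θ = lobachevskyAbelMean 1 θ := by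
    simp_rw [lobachevskyAbelMean, ofReal_one, one_mul, norm_one_sub_exp_two_mul,
      intervalIntegral.integral_neg, Λ]
  rw [hΛ]
  refine intervalIntegral.tendsto_integral_filter_of_dominated_convergence
    (fun t => |Real.log (|Real.sin (2 * t)|)| + |Real.log 3|)
    (Eventually.of_forall fun r => (by fun_prop : Measurable _).aestronglyMeasurable) ?_ ?_ ?_
  · filter_upwards [Ioo_mem_nhds (show (0 : ℝ) < 1 by norm_num) (show (1 : ℝ) < 2 by norm_num)]
      with r hr
    filter_upwards [ae_sin_mul_ne_zero two_ne_zero] with t ht _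
    rw [norm_neg, Real.norm_eq_abs]
    refine abs_log_le_abs_log_add_abs_log (abs_pos.mpr ht) (abs_sin_le_norm_one_sub_mul_exp r _)
      ((norm_one_sub_mul_exp_le r _).trans ?_)
    rw [abs_of_pos hr.1]
    linarith [hr.2]
  · have hlog : IntervalIntegrable (fun t : ℝ => Real.log (Real.sin (2 * t))) volume 0 θ := by
      simpa using (intervalIntegrable_log_sin (a := 0) (b := 2 * θ)).comp_mul_left (c := 2)
    simp_rw [Real.log_abs]
    exact hlog.abs.add intervalIntegrable_const
  · filter_upwards [ae_sin_mul_ne_zero two_ne_zero] with t ht _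
    have hpos : ‖1 - ((1 : ℝ) : ℂ) * exp ((2 * t : ℝ) * I)‖ ≠ 0 :=
      ((abs_pos.mpr ht).trans_le (abs_sin_le_norm_one_sub_mul_exp 1 _)).ne'
    exact ((Continuous.continuousAt
      (by fun_prop : Continuous fun r : ℝ => ‖1 - r * exp ((2 * t : ℝ) * I)‖)).log hpos).neg.tendsto

lemma summable_sin_div_sq (f : ℕ → ℝ) : Summable fun n : ℕ => Real.sin (f n) / n ^ 2 :=
  (Real.summable_one_div_nat_pow.mpr one_lt_two).of_norm_bounded fun n => by
    rw [Real.norm_eq_abs, abs_div, abs_of_nonneg (sq_nonneg (n : ℝ))]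
    exact div_le_div_of_nonneg_right (Real.abs_sin_le_one _) (sq_nonneg _)

theorem lobachevsky_fourier (θ : ℝ) :
    Λ θ = (1 / 2) * ∑' m : ℕ+, Real.sin (2 * m * θ) / (m : ℝ) ^ 2 := by
  have hAbel := Real.tendsto_tsum_powerSeries_nhdsWithin_lt
    ((summable_sin_div_sq fun n : ℕ => 2 * n * θ).div_const 2).hasSum.tendsto_sum_nat
  have hAbelSum : (fun r => lobachevskyAbelMean r θ)
      =ᶠ[𝓝[<] 1] fun r => ∑' n : ℕ, Real.sin (2 * n * θ) / n ^ 2 / 2 * r ^ n := by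
    filter_upwards [Ioo_mem_nhdsLT (show (-1 : ℝ) < 1 by norm_num)] with r hr
    exact (hasSum_lobachevskyAbelMean (abs_lt.mpr hr) θ).tsum_eq.symm
  have hlim := tendsto_nhds_unique
    (((tendsto_lobachevskyAbelMean θ).mono_left nhdsWithin_le_nhds).congr' hAbelSum) hAbel
  rw [hlim, tsum_div_const,
    ← tsum_pnat_eq_tsum_of_eq_zero (f := fun n : ℕ => Real.sin (2 * n * θ) / n ^ 2) (by simp)]
  ring
end
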